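/- Let f be a quasiperiodically forced circle homeomorphism over an irrational ω with lift F, and fix ε > 0. Let A ≺ B be minimal F-invariant strips with no F-invariant strip S satisfying A ≺ S ≺ B, and let C := {(θ,x) ∈ T¹×ℝ : φ⁺_A(θ) < x < φ⁻_B(θ)}. Assume F restricted to C is topologically transitive (for all nonempty open U, V ⊆ C there exists n ∈ ℤ with F^n(U) ∩ V ≠ ∅). Then for every θ₀ ∈ T¹ and every x₀ > φ⁺_A(θ₀) there exists k ∈ ℕ with (F_ε)^k_{θ₀}(x₀) > φ⁺_B(θ₀ + kω). -/

import Mathlib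

open Filter Topology MeasureTheory
open scoped ENNReal

noncomputable section

/-- The circle `T¹ = ℝ/ℤ`. -/
abbrev T1 := AddCircle (1 : ℝ)

/-- Fiberwise iterate of the skew product: `fiberIter ω F n θ x = F^n_θ(x)`. -/
def fiberIter (ω : ℝ) (F : T1 → ℝ → ℝ) : ℕ → T1 → ℝ → ℝ
  | 0, _, x => x
  | n + 1, θ, x => fiberIter ω F n (θ + (ω : T1)) (F θ x)

/-- `F` is (the fiber part of) a lift of a quasiperiodically forced circle homeomorphism
over `ω`: `F(θ,x) = (θ+ω, F_θ(x))`, each `F_θ` a strictly increasing homeomorphism of `ℝ`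
commuting with `x ↦ x+1`. -/
structure IsQpfLift (ω : ℝ) (F : T1 → ℝ → ℝ) : Prop where
  cont : Continuous fun p : T1 × ℝ => F p.1 p.2
  mono : ∀ θ, StrictMono (F θ)
  surj : ∀ θ, Function.Surjective (F θ)
  per  : ∀ θ x, F θ (x + 1) = F θ x + 1

/-- `ρ` is the fibered rotation number of the lift `F`. -/
def HasRotNum (ω : ℝ) (F : T1 → ℝ → ℝ) (ρ : ℝ) : Prop :=
  ∀ θ x, Tendsto (fun n : ℕ => (fiberIter ω F n θ x - x) / n) atTop (𝓝 ρ)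

/-- The skew-product map on `T¹ × ℝ` induced by the (fiber part of the) lift. -/
def skew (ω : ℝ) (F : T1 → ℝ → ℝ) : T1 × ℝ → T1 × ℝ :=
  fun p => (p.1 + (ω : T1), F p.1 p.2)

/-- An `F`-invariant strip: a compact invariant set all of whose fibers are nonempty
compact intervals. -/
def IsInvStrip (ω : ℝ) (F : T1 → ℝ → ℝ) (A : Set (T1 × ℝ)) : Prop :=
  IsCompact A ∧ skew ω F '' A = A ∧
    ∀ θ : T1, ∃ a b : ℝ, a ≤ b ∧ {x : ℝ | (θ, x) ∈ A} = Set.Icc a b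

/-- Upper bounding graph `φ⁺_A(θ) = sup A_θ`. -/
def phiSup (A : Set (T1 × ℝ)) (θ : T1) : ℝ := sSup {x : ℝ | (θ, x) ∈ A}

/-- Lower bounding graph `φ⁻_A(θ) = inf A_θ`. -/
def phiInf (A : Set (T1 × ℝ)) (θ : T1) : ℝ := sInf {x : ℝ | (θ, x) ∈ A}

/-- `A ≺ B`: the strip `A` lies strictly below the strip `B`. -/
def StripLt (A B : Set (T1 × ℝ)) : Prop := ∀ θ, phiSup A θ < phiInf B θ

/-- A minimal invariant strip: one not strictly containing another invariant strip. -/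
def IsMinimalStrip (ω : ℝ) (F : T1 → ℝ → ℝ) (A : Set (T1 × ℝ)) : Prop :=
  IsInvStrip ω F A ∧ ∀ S : Set (T1 × ℝ), IsInvStrip ω F S → S ⊆ A → S = A


/-!
The `F_ε`-orbit of `(θ₀, x₀)` first reaches the lower graph of `B` and then cannot stay inside `B`,
so it leaves `B` through the top. It reaches `B` because it dominates the `F`-orbits of points just
above `A`, and by transitivity some of these come close enough to `B` for one `F_ε`-step to cross
`φ⁻_B`. It cannot stay in `B` by minimality: the upper graph of its orbit closure is pushed down by
`ε` under `F`, so the part of `B` below that graph contains an invariant strip smaller than `B`.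
-/

open Function Set
open scoped Pointwise

section Skew

variable {ω : ℝ} {F G : T1 → ℝ → ℝ}

lemma fiberIter_succ' (n : ℕ) (θ : T1) (x : ℝ) :
    fiberIter ω F (n + 1) θ x = F (θ + n • (ω : T1)) (fiberIter ω F n θ x) := by
  induction n generalizing θ x with
  | zero => simp [fiberIter]
  | succ n ih =>
    change fiberIter ω F (n + 1) (θ + ω) (F θ x) = _
    rw [ih, succ_nsmul' _ n, ← add_assoc]
    rfl

lemma fiberIter_add (m n : ℕ) (θ : T1) (x : ℝ) :
    fiberIter ω F (m + n) θ x = fiberIter ω F n (θ + m • (ω : T1)) (fiberIter ω F m θ x) := by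
  induction m generalizing θ x with
  | zero => simp [fiberIter]
  | succ m ih =>
    rw [Nat.add_right_comm]
    change fiberIter ω F (m + n) (θ + ω) (F θ x) = _
    rw [ih, succ_nsmul', ← add_assoc]
    rfl

lemma skew_iterate (n : ℕ) (p : T1 × ℝ) :
    (skew ω F)^[n] p = (p.1 + n • (ω : T1), fiberIter ω F n p.1 p.2) := by
  induction n with
  | zero => simp [fiberIter]
  | succ n ih => rw [iterate_succ_apply', ih, fiberIter_succ', succ_nsmul, ← add_assoc]; rfl

lemma continuous_skew (hF : Continuous fun p : T1 × ℝ => F p.1 p.2) : Continuous (skew ω F) :=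
  (continuous_fst.add continuous_const).prodMk hF

lemma IsQpfLift.injective_skew (hF : IsQpfLift ω F) : Injective (skew ω F) := by
  rintro ⟨θ, x⟩ ⟨θ', x'⟩ h
  simp only [skew, Prod.mk_inj, add_left_inj] at h
  obtain ⟨rfl, h⟩ := h
  rw [(hF.mono θ).injective h]

lemma IsQpfLift.continuous_apply (hF : IsQpfLift ω F) (θ : T1) : Continuous (F θ) :=
  hF.cont.comp (Continuous.prodMk_right θ)

lemma fiberIter_le_fiberIter (hG : ∀ θ, Monotone (G θ)) (hFG : ∀ θ x, F θ x ≤ G θ x)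
    (n : ℕ) (θ : T1) {x y : ℝ} (hxy : x ≤ y) : fiberIter ω F n θ x ≤ fiberIter ω G n θ y := by
  induction n generalizing θ x y with
  | zero => exact hxy
  | succ n ih => exact ih _ ((hFG θ x).trans (hG θ hxy))

lemma le_fiberIter_of_invariant {g : T1 → ℝ} (hg : ∀ θ, F θ (g θ) = g (θ + ω))
    (hG : ∀ θ, Monotone (G θ)) (hFG : ∀ θ x, F θ x ≤ G θ x) {θ : T1} {x : ℝ} (hx : g θ ≤ x)
    (n : ℕ) : g (θ + n • (ω : T1)) ≤ fiberIter ω G n θ x := by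
  induction n generalizing θ x with
  | zero => simpa
  | succ n ih =>
    rw [succ_nsmul', ← add_assoc]
    exact ih ((hg θ).symm.le.trans ((hFG θ _).trans (hG θ hx)))

end Skew

section Fibers

def fiber (K : Set (T1 × ℝ)) (θ : T1) : Set ℝ := Prod.mk θ ⁻¹' K

variable {K : Set (T1 × ℝ)} {θ : T1} {x : ℝ}

lemma isCompact_fiber (hK : IsCompact K) (θ : T1) : IsCompact (fiber K θ) :=
  (hK.image continuous_snd).of_isClosed_subset (hK.isClosed.preimage (Continuous.prodMk_right θ))
    fun _ hx => ⟨_, hx, rfl⟩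

lemma le_phiSup (hK : IsCompact K) (h : (θ, x) ∈ K) : x ≤ phiSup K θ :=
  le_csSup (isCompact_fiber hK θ).bddAbove h

lemma phiInf_le (hK : IsCompact K) (h : (θ, x) ∈ K) : phiInf K θ ≤ x :=
  csInf_le (isCompact_fiber hK θ).bddBelow h

lemma phiSup_mem (hK : IsCompact K) (hne : (fiber K θ).Nonempty) : (θ, phiSup K θ) ∈ K :=
  (isCompact_fiber hK θ).sSup_mem hne

lemma phiInf_mem (hK : IsCompact K) (hne : (fiber K θ).Nonempty) : (θ, phiInf K θ) ∈ K :=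
  (isCompact_fiber hK θ).sInf_mem hne

/-- The region below the upper graph is the Minkowski sum `K + {0} × (-∞, 0]` of a compact and a
closed set. -/
lemma isClosed_setOf_le_phiSup (hK : IsCompact K) (hne : ∀ θ, (fiber K θ).Nonempty) :
    IsClosed {p : T1 × ℝ | p.2 ≤ phiSup K p.1} := by
  have : {p : T1 × ℝ | p.2 ≤ phiSup K p.1} = K + ({0} : Set T1) ×ˢ Iic (0 : ℝ) := by
    ext ⟨θ, x⟩
    constructor
    · intro hx
      exact ⟨_, phiSup_mem hK (hne θ), (0, x - phiSup K θ),
        ⟨rfl, (sub_nonpos.2 hx : x - phiSup K θ ≤ 0)⟩, by simp⟩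
    · rintro ⟨⟨θ', y⟩, hy, ⟨_, t⟩, ⟨rfl, ht⟩, h⟩
      simp only [Prod.mk_add_mk, add_zero, Prod.mk_inj] at h
      obtain ⟨rfl, rfl⟩ := h
      show y + t ≤ phiSup K θ'
      linarith [le_phiSup hK hy, mem_Iic.1 ht]
  rw [this]
  exact (isClosed_singleton.prod isClosed_Iic).add_left_of_isCompact hK

lemma isClosed_setOf_phiInf_le (hK : IsCompact K) (hne : ∀ θ, (fiber K θ).Nonempty) :
    IsClosed {p : T1 × ℝ | phiInf K p.1 ≤ p.2} := by
  have : {p : T1 × ℝ | phiInf K p.1 ≤ p.2} = K + ({0} : Set T1) ×ˢ Ici (0 : ℝ) := by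
    ext ⟨θ, x⟩
    constructor
    · intro hx
      exact ⟨_, phiInf_mem hK (hne θ), (0, x - phiInf K θ),
        ⟨rfl, (sub_nonneg.2 hx : 0 ≤ x - phiInf K θ)⟩, by simp⟩
    · rintro ⟨⟨θ', y⟩, hy, ⟨_, t⟩, ⟨rfl, ht⟩, h⟩
      simp only [Prod.mk_add_mk, add_zero, Prod.mk_inj] at h
      obtain ⟨rfl, rfl⟩ := h
      show phiInf K θ' ≤ y + t
      linarith [phiInf_le hK hy, mem_Ici.1 ht]
  rw [this]
  exact (isClosed_singleton.prod isClosed_Ici).add_left_of_isCompact hK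

lemma bddBelow_range_phiSup (hK : IsCompact K) (hne : ∀ θ, (fiber K θ).Nonempty) :
    BddBelow (range (phiSup K)) :=
  BddBelow.mono (t := Prod.snd '' K) (range_subset_iff.2 fun θ => ⟨_, phiSup_mem hK (hne θ), rfl⟩)
    (hK.image continuous_snd).bddBelow

lemma bddAbove_range_phiInf (hK : IsCompact K) (hne : ∀ θ, (fiber K θ).Nonempty) :
    BddAbove (range (phiInf K)) :=
  BddAbove.mono (t := Prod.snd '' K) (range_subset_iff.2 fun θ => ⟨_, phiInf_mem hK (hne θ), rfl⟩)
    (hK.image continuous_snd).bddAbove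

lemma fiber_skew_image {ω : ℝ} (F : T1 → ℝ → ℝ) (K : Set (T1 × ℝ)) (θ : T1) :
    fiber (skew ω F '' K) (θ + ω) = F θ '' fiber K θ := by
  ext y
  constructor
  · rintro ⟨⟨θ', x⟩, hx, h⟩
    simp only [skew, Prod.mk_inj, add_left_inj] at h
    obtain ⟨rfl, rfl⟩ := h
    exact ⟨x, hx, rfl⟩
  · rintro ⟨x, hx, rfl⟩
    exact ⟨(θ, x), hx, rfl⟩

end Fibers

section Strips

variable {ω : ℝ} {F : T1 → ℝ → ℝ} {A B : Set (T1 × ℝ)}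

lemma IsInvStrip.fiber_eq (hA : IsInvStrip ω F A) (θ : T1) :
    fiber A θ = Icc (phiInf A θ) (phiSup A θ) := by
  obtain ⟨a, b, hab, h⟩ := hA.2.2 θ
  rw [phiInf, phiSup, h, csInf_Icc hab, csSup_Icc hab]
  exact h

lemma IsInvStrip.fiber_nonempty (hA : IsInvStrip ω F A) (θ : T1) : (fiber A θ).Nonempty := by
  obtain ⟨a, b, hab, h⟩ := hA.2.2 θ
  exact ⟨a, show a ∈ {x | (θ, x) ∈ A} from h ▸ left_mem_Icc.2 hab⟩

lemma IsInvStrip.mem_iff (hA : IsInvStrip ω F A) {θ : T1} {x : ℝ} :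
    (θ, x) ∈ A ↔ phiInf A θ ≤ x ∧ x ≤ phiSup A θ := by
  change x ∈ fiber A θ ↔ _
  rw [hA.fiber_eq]
  rfl

lemma IsInvStrip.fiber_add (hA : IsInvStrip ω F A) (θ : T1) :
    fiber A (θ + ω) = F θ '' fiber A θ := by
  rw [← fiber_skew_image, hA.2.1]

lemma IsInvStrip.map_phiSup (hA : IsInvStrip ω F A) (hF : IsQpfLift ω F) (θ : T1) :
    F θ (phiSup A θ) = phiSup A (θ + ω) := by
  change F θ (sSup (fiber A θ)) = sSup (fiber A (θ + ω))
  rw [hA.fiber_add]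
  exact (hF.mono θ).monotone.map_csSup_of_continuousAt (hF.continuous_apply θ).continuousAt
    (hA.fiber_nonempty θ) (isCompact_fiber hA.1 θ).bddAbove

lemma IsInvStrip.map_phiInf (hA : IsInvStrip ω F A) (hF : IsQpfLift ω F) (θ : T1) :
    F θ (phiInf A θ) = phiInf A (θ + ω) := by
  change F θ (sInf (fiber A θ)) = sInf (fiber A (θ + ω))
  rw [hA.fiber_add]
  exact (hF.mono θ).monotone.map_csInf_of_continuousAt (hF.continuous_apply θ).continuousAt
    (hA.fiber_nonempty θ) (isCompact_fiber hA.1 θ).bddBelow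

/-- The region `C` between the strips `A` and `B`. -/
def stripGap (A B : Set (T1 × ℝ)) : Set (T1 × ℝ) :=
  {p | phiSup A p.1 < p.2 ∧ p.2 < phiInf B p.1}

lemma isOpen_stripGap (hA : IsCompact A) (hA' : ∀ θ, (fiber A θ).Nonempty)
    (hB : IsCompact B) (hB' : ∀ θ, (fiber B θ).Nonempty) : IsOpen (stripGap A B) := by
  have h₁ := (isClosed_setOf_le_phiSup hA hA').isOpen_compl
  have h₂ := (isClosed_setOf_phiInf_le hB hB').isOpen_compl
  simp only [compl_ofPred, not_le] at h₁ h₂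
  exact h₁.inter h₂

end Strips

section Dynamics

variable {X : Type*} {f : X → X} {K C : Set X}

lemma iInter_iterate_image_subset (f : X → X) (K : Set X) : ⋂ n, f^[n] '' K ⊆ K :=
  iInter_subset_of_subset 0 (by simp)

lemma image_iInter_iterate_image (hf : Injective f) (hK : MapsTo f K K) :
    f '' ⋂ n, f^[n] '' K = ⋂ n, f^[n] '' K := by
  rw [hf.injOn.image_iInter_eq]
  simp_rw [← image_comp, ← iterate_succ']
  refine Subset.antisymm (subset_iInter fun n => ?_)
    (subset_iInter fun n => iInter_subset _ (n + 1))
  cases n with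
  | zero => simpa using (iInter_subset _ 0).trans hK.image_subset
  | succ n => exact iInter_subset _ n

variable [TopologicalSpace X]

lemma isCompact_iInter_iterate_image [T2Space X] (hf : Continuous f) (hK : IsCompact K) :
    IsCompact (⋂ n, f^[n] '' K) :=
  hK.of_isClosed_subset (isClosed_iInter fun n => (hK.image (hf.iterate n)).isClosed)
    (iInter_iterate_image_subset f K)

lemma mapsTo_closure_range_iterate (hf : Continuous f) (x : X) :
    MapsTo f (closure (range fun n => f^[n] x)) (closure (range fun n => f^[n] x)) :=
  MapsTo.closure (by rintro _ ⟨n, rfl⟩; exact ⟨n + 1, iterate_succ_apply' f n x⟩) hf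

/-- Two-sided topological transitivity: `U` may reach `V` backwards in time. -/
def IsTransitiveOn (f : X → X) (C : Set X) : Prop :=
  ∀ U V : Set X, IsOpen U → IsOpen V → U.Nonempty → V.Nonempty → U ⊆ C → V ⊆ C →
    ∃ n : ℕ, ((f^[n] '' U) ∩ V).Nonempty ∨ ((f^[n] ⁻¹' U) ∩ V).Nonempty

variable [T2Space X] [PerfectSpace X]

/-- Split `O` into two disjoint open pieces; transitivity between them cannot happen in time `0`. -/
lemma IsTransitiveOn.exists_pos_iterate_mem (htrans : IsTransitiveOn f C) {O : Set X}
    (hO : IsOpen O) (hne : O.Nonempty) (hOC : O ⊆ C) : ∃ n, 0 < n ∧ ∃ p ∈ O, f^[n] p ∈ O := by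
  obtain ⟨x, hx⟩ := hne
  obtain ⟨y, hyx, hyO⟩ := (𝓝[≠] x).nonempty_of_mem (inter_mem_nhdsWithin {x}ᶜ (hO.mem_nhds hx))
  obtain ⟨U, V, hU, hV, hxU, hyV, hUV⟩ := t2_separation (Ne.symm hyx)
  obtain ⟨n, hn⟩ := htrans (O ∩ U) (O ∩ V) (hO.inter hU) (hO.inter hV) ⟨x, hx, hxU⟩ ⟨y, hyO, hyV⟩
    (inter_subset_left.trans hOC) (inter_subset_left.trans hOC)
  obtain ⟨p, hp, hnp, hne⟩ : ∃ p ∈ O, f^[n] p ∈ O ∧ f^[n] p ≠ p := by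
    rcases hn with ⟨_, ⟨p, hp, rfl⟩, hq⟩ | ⟨p, hp, hq⟩
    · exact ⟨p, hp.1, hq.1, (hUV.ne_of_mem hp.2 hq.2).symm⟩
    · exact ⟨p, hq.1, hp.1, hUV.ne_of_mem hp.2 hq.2⟩
  refine ⟨n, Nat.pos_of_ne_zero ?_, p, hp, hnp⟩
  rintro rfl
  exact hne rfl

lemma IsTransitiveOn.exists_le_iterate_mem (htrans : IsTransitiveOn f C) (hf : Continuous f)
    (m : ℕ) {O : Set X} (hO : IsOpen O) (hne : O.Nonempty) (hOC : O ⊆ C) :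
    ∃ N, m ≤ N ∧ ∃ p ∈ O, f^[N] p ∈ O := by
  induction m with
  | zero =>
    obtain ⟨p, hp⟩ := hne
    exact ⟨0, le_rfl, p, hp, hp⟩
  | succ m ih =>
    obtain ⟨N, hN, p, hp, hNp⟩ := ih
    obtain ⟨n, hn, q, hq, hnq⟩ := htrans.exists_pos_iterate_mem
      (hO.inter ((hf.iterate N).isOpen_preimage O hO)) ⟨p, hp, hNp⟩ (inter_subset_left.trans hOC)
    refine ⟨N + n, by omega, q, hq.1, ?_⟩
    rw [iterate_add_apply]
    exact hnq.2

lemma IsTransitiveOn.exists_iterate_mem (htrans : IsTransitiveOn f C) (hf : Continuous f)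
    {U V : Set X} (hU : IsOpen U) (hV : IsOpen V) (hUne : U.Nonempty) (hVne : V.Nonempty)
    (hUC : U ⊆ C) (hVC : V ⊆ C) : ∃ n, ∃ u ∈ U, f^[n] u ∈ V := by
  obtain ⟨m, ⟨_, ⟨u, hu, rfl⟩, hv⟩ | ⟨v, hv, hvV⟩⟩ := htrans U V hU hV hUne hVne hUC hVC
  · exact ⟨m, u, hu, hv⟩
  -- `V` reaches `U` in time `m`; a return of `V ∩ f^[m] ⁻¹' U` to itself after `N ≥ m` steps
  -- contains a passage from `U` to `V` in time `N - m`.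
  obtain ⟨N, hN, w, hw, hNw⟩ := htrans.exists_le_iterate_mem hf m
    (hV.inter ((hf.iterate m).isOpen_preimage U hU)) ⟨v, hvV, hv⟩ (inter_subset_left.trans hVC)
  refine ⟨N - m, f^[m] w, hw.2, ?_⟩
  rw [← iterate_add_apply, Nat.sub_add_cancel hN]
  exact hNw.1

end Dynamics

section Climbing

variable {ω ε : ℝ} {F G : T1 → ℝ → ℝ} {A B : Set (T1 × ℝ)}

lemma denseRange_add_nsmul (hω : Irrational ω) (θ : T1) :
    DenseRange fun n : ℕ => θ + n • (ω : T1) := by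
  have h : DenseRange fun n : ℕ => n • (ω : T1) :=
    denseRange_zsmul_iff_nsmul.1 (AddCircle.denseRange_zsmul_coe_iff.2 (by simpa using hω))
  exact (Homeomorph.addLeft θ).surjective.denseRange.comp h (continuous_const_add θ)

lemma fiber_nonempty_of_forall_nsmul (hω : Irrational ω) {K : Set (T1 × ℝ)} (hK : IsCompact K)
    {θ₀ : T1} (h : ∀ n : ℕ, (fiber K (θ₀ + n • (ω : T1))).Nonempty) (θ : T1) :
    (fiber K θ).Nonempty := by
  have hθ : θ ∈ Prod.fst '' K := by
    refine closure_minimal (range_subset_iff.2 fun n => ?_) (hK.image continuous_fst).isClosed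
      (by rw [(denseRange_add_nsmul hω θ₀).closure_range]; trivial)
    obtain ⟨x, hx⟩ := h n
    exact ⟨_, hx, rfl⟩
  obtain ⟨⟨_, x⟩, hx, rfl⟩ := hθ
  exact ⟨x, hx⟩

/-- `K` is the closure of the orbit; its fibers are nonempty because the rotation orbit is dense. -/
lemma exists_subinvariant_upper_graph (hω : Irrational ω)
    (hG : Continuous fun p : T1 × ℝ => G p.1 p.2) (hB : IsCompact B) {p : T1 × ℝ}
    (hin : ∀ n, (skew ω G)^[n] p ∈ B) :
    ∃ K ⊆ B, IsCompact K ∧ (∀ θ, (fiber K θ).Nonempty) ∧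
      ∀ θ, G θ (phiSup K θ) ≤ phiSup K (θ + ω) := by
  set K := closure (range fun n => (skew ω G)^[n] p)
  have hKB : K ⊆ B := closure_minimal (range_subset_iff.2 hin) hB.isClosed
  have hK : IsCompact K := hB.of_isClosed_subset isClosed_closure hKB
  have hKne : ∀ θ, (fiber K θ).Nonempty := fiber_nonempty_of_forall_nsmul hω hK
    (θ₀ := p.1) fun n => ⟨fiberIter ω G n p.1 p.2, subset_closure ⟨n, skew_iterate n p⟩⟩
  refine ⟨K, hKB, hK, hKne, fun θ => le_phiSup hK ?_⟩
  exact mapsTo_closure_range_iterate (continuous_skew hG) p (phiSup_mem hK (hKne θ))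

/-- The strip is the maximal invariant subset `⋂ₙ Fⁿ(R)`; the invariant graph makes its fibers
nonempty. -/
lemma exists_isInvStrip_subset (hF : IsQpfLift ω F) {R : Set (T1 × ℝ)} (hR : IsCompact R)
    (hRF : MapsTo (skew ω F) R R) (hconn : ∀ θ, (fiber R θ).OrdConnected) {g : T1 → ℝ}
    (hg : ∀ θ, F θ (g θ) = g (θ + ω)) (hgR : ∀ θ, (θ, g θ) ∈ R) :
    ∃ S, IsInvStrip ω F S ∧ S ⊆ R := by
  set f := skew ω F
  have hiter : ∀ n, ∀ θ, (fiber (f^[n] '' R) θ).OrdConnected ∧ (θ, g θ) ∈ f^[n] '' R := by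
    intro n
    induction n with
    | zero => simpa using fun θ => ⟨hconn θ, hgR θ⟩
    | succ n ih =>
      intro θ
      obtain ⟨θ, rfl⟩ := add_right_surjective (ω : T1) θ
      rw [iterate_succ', image_comp, fiber_skew_image]
      refine ⟨isPreconnected_iff_ordConnected.1 ?_, ⟨_, (ih θ).2, by simp [f, skew, hg]⟩⟩
      exact (ih θ).1.isPreconnected.image _ (hF.continuous_apply θ).continuousOn
  have hS := isCompact_iInter_iterate_image (continuous_skew hF.cont) hR (f := f)
  refine ⟨⋂ n, f^[n] '' R, ⟨hS, image_iInter_iterate_image hF.injective_skew hRF, fun θ => ?_⟩,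
    iInter_iterate_image_subset f R⟩
  have hfib : fiber (⋂ n, f^[n] '' R) θ = ⋂ n, fiber (f^[n] '' R) θ := preimage_iInter
  have hc : IsCompact (fiber (⋂ n, f^[n] '' R) θ) := isCompact_fiber hS θ
  have hconn : IsConnected (fiber (⋂ n, f^[n] '' R) θ) := by
    rw [hfib]
    exact ⟨⟨g θ, mem_iInter.2 fun n => (hiter n θ).2⟩,
      (ordConnected_iInter fun n => (hiter n θ).1).isPreconnected⟩
  exact ⟨_, _, csInf_le_csSup hconn.nonempty hc.bddBelow hc.bddAbove,
    eq_Icc_of_connected_compact hconn hc⟩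

theorem IsMinimalStrip.not_forall_iterate_mem (hB : IsMinimalStrip ω F B) (hω : Irrational ω)
    (hF : IsQpfLift ω F) (hε : 0 < ε) (p : T1 × ℝ) :
    ¬ ∀ n, (skew ω (fun θ x => F θ x + ε))^[n] p ∈ B := by
  intro hin
  obtain ⟨K, hKB, hK, hKne, hKG⟩ :=
    exists_subinvariant_upper_graph hω (hF.cont.add continuous_const) hB.1.1 hin
  have hphiInf_le : ∀ θ, phiInf B θ ≤ phiSup K θ := fun θ =>
    phiInf_le hB.1.1 (hKB (phiSup_mem hK (hKne θ)))
  set R := B ∩ {q | q.2 ≤ phiSup K q.1}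
  obtain ⟨S, hS, hSR⟩ := exists_isInvStrip_subset hF (R := R)
    (hB.1.1.inter_right (isClosed_setOf_le_phiSup hK hKne))
    (fun q hq => ⟨hB.1.2.1 ▸ mem_image_of_mem _ hq.1, show F q.1 q.2 ≤ phiSup K (q.1 + ω) by
      linarith [hKG q.1, (hF.mono q.1).monotone hq.2]⟩)
    (fun θ => show (fiber B θ ∩ Iic (phiSup K θ)).OrdConnected from
      (hB.1.fiber_eq θ ▸ ordConnected_Icc : (fiber B θ).OrdConnected).inter ordConnected_Iic)
    (hB.1.map_phiInf hF) (fun θ => ⟨phiInf_mem hB.1.1 (hB.1.fiber_nonempty θ), hphiInf_le θ⟩)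
  -- By minimality `S = B`, so `φ⁺_B ≤ φ⁺_K`, against `F (φ⁺_K θ) + ε ≤ φ⁺_K (θ + ω)`.
  have hBR : B ⊆ R := hB.2 S hS (hSR.trans inter_subset_left) ▸ hSR
  have hle : phiSup B p.1 ≤ phiSup K p.1 := (hBR (phiSup_mem hB.1.1 (hB.1.fiber_nonempty p.1))).2
  have hK_le_B : phiSup K (p.1 + ω) ≤ phiSup B (p.1 + ω) :=
    le_phiSup hB.1.1 (hKB (phiSup_mem hK (hKne _)))
  linarith [hB.1.map_phiSup hF p.1, (hF.mono p.1).monotone hle, hKG p.1]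

theorem IsMinimalStrip.exists_phiSup_lt_fiberIter (hB : IsMinimalStrip ω F B) (hω : Irrational ω)
    (hF : IsQpfLift ω F) (hε : 0 < ε) {θ : T1} {x : ℝ} (hx : phiInf B θ ≤ x) :
    ∃ k : ℕ, phiSup B (θ + k • (ω : T1)) < fiberIter ω (fun θ x => F θ x + ε) k θ x := by
  by_contra! h
  refine hB.not_forall_iterate_mem hω hF hε (θ, x) fun n => ?_
  rw [skew_iterate, hB.1.mem_iff]
  exact ⟨le_fiberIter_of_invariant (hB.1.map_phiInf hF) (fun θ => (hF.mono θ).monotone.add_const ε)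
    (fun _ _ => le_add_of_nonneg_right hε.le) hx n, h n⟩

end Climbing

section Transitive

variable {ω ε : ℝ} {F : T1 → ℝ → ℝ} {A B : Set (T1 × ℝ)}

lemma nonempty_stripGap_inter_lt (hAB : StripLt A B) {c : ℝ} (hc : ⨅ θ, phiSup A θ < c) :
    (stripGap A B ∩ {p | p.2 < c}).Nonempty := by
  obtain ⟨θ, hθ⟩ := exists_lt_of_ciInf_lt hc
  obtain ⟨x, hx₁, hx₂⟩ := exists_between (lt_min hθ (hAB θ))
  exact ⟨(θ, x), ⟨hx₁, hx₂.trans_le (min_le_right _ _)⟩, hx₂.trans_le (min_le_left _ _)⟩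

lemma nonempty_stripGap_inter_preimage (hF : IsQpfLift ω F) (hB : IsInvStrip ω F B)
    (hAB : StripLt A B) (hε : 0 < ε) :
    (stripGap A B ∩ skew ω (fun θ x => F θ x + ε) ⁻¹' {q | ⨆ θ, phiInf B θ < q.2}).Nonempty := by
  obtain ⟨θ, hθ⟩ := exists_lt_of_lt_ciSup (sub_lt_self (⨆ θ, phiInf B θ) hε)
  obtain ⟨θ, rfl⟩ := add_right_surjective (ω : T1) θ
  rw [← hB.map_phiInf hF] at hθ
  have hnear : ∀ᶠ x in 𝓝[<] (phiInf B θ), (⨆ θ, phiInf B θ) - ε < F θ x :=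
    ((hF.continuous_apply θ).continuousAt.eventually_const_lt hθ).filter_mono nhdsWithin_le_nhds
  obtain ⟨x, hx, hxA, hxB⟩ := (hnear.and (Ioo_mem_nhdsLT (hAB θ))).exists
  exact ⟨(θ, x), ⟨hxA, hxB⟩, show _ < F θ x + ε by linarith⟩

theorem exists_phiInf_lt_fiberIter (hω : Irrational ω) (hF : IsQpfLift ω F) (hε : 0 < ε)
    (hA : IsInvStrip ω F A) (hB : IsInvStrip ω F B) (hAB : StripLt A B)
    (htrans : IsTransitiveOn (skew ω F) (stripGap A B)) {θ₀ : T1} {x₀ : ℝ}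
    (hx₀ : phiSup A θ₀ ≤ x₀) :
    ∃ k : ℕ, phiInf B (θ₀ + k • (ω : T1)) < fiberIter ω (fun θ x => F θ x + ε) k θ₀ x₀ := by
  set G : T1 → ℝ → ℝ := fun θ x => F θ x + ε
  have hG : ∀ θ, Monotone (G θ) := fun θ => (hF.mono θ).monotone.add_const ε
  have hFG : ∀ θ x, F θ x ≤ G θ x := fun _ _ => le_add_of_nonneg_right hε.le
  set a := ⨅ θ, phiSup A θ
  set s := ⨆ θ, phiInf B θ
  have hψ : ∀ k : ℕ, a + ε ≤ fiberIter ω G (k + 1) θ₀ x₀ := fun k => by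
    have h := (hF.mono (θ₀ + k • (ω : T1))).monotone
      (le_fiberIter_of_invariant (hA.map_phiSup hF) hG hFG hx₀ k)
    rw [hA.map_phiSup hF] at h
    rw [fiberIter_succ']
    linarith [ciInf_le (bddBelow_range_phiSup hA.1 hA.fiber_nonempty) (θ₀ + k • (ω : T1) + ω)]
  have hC := isOpen_stripGap hA.1 hA.fiber_nonempty hB.1 hB.fiber_nonempty
  -- The source `C ∩ {x < a + ε}` lies below the orbit from time `1` on, and one `F_ε`-step from
  -- the target `V` lands above every point of the lower graph of `B`.
  set V := stripGap A B ∩ skew ω G ⁻¹' {q | s < q.2}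
  have hV : IsOpen V := hC.inter ((isOpen_lt continuous_const continuous_snd).preimage
    (continuous_skew (hF.cont.add continuous_const)))
  obtain ⟨n, u, hu, hnu⟩ := htrans.exists_iterate_mem (continuous_skew hF.cont)
    (hC.inter (isOpen_lt continuous_snd continuous_const)) hV
    (nonempty_stripGap_inter_lt hAB (lt_add_of_pos_right a hε))
    (nonempty_stripGap_inter_preimage hF hB hAB hε) inter_subset_left inter_subset_left
  have hW : IsOpen {θ | (θ, u.2) ∈ (skew ω F)^[n] ⁻¹' V} :=
    (hV.preimage ((continuous_skew hF.cont).iterate n)).preimage (Continuous.prodMk_left u.2)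
  obtain ⟨k, hk⟩ := (denseRange_add_nsmul hω (θ₀ + ω)).exists_mem_open hW ⟨u.1, hnu⟩
  rw [add_assoc, ← succ_nsmul', mem_ofPred_eq, mem_preimage, skew_iterate] at hk
  refine ⟨k + 1 + n + 1, (le_ciSup (bddAbove_range_phiInf hB.1 hB.fiber_nonempty) _).trans_lt ?_⟩
  rw [fiberIter_succ', fiberIter_add, add_nsmul, ← add_assoc]
  exact hk.2.trans_le (hG _ (fiberIter_le_fiberIter hG hFG n _ (hu.2.le.trans (hψ k))))

end Transitive

theorem transitive_case_climbing_general
    (ω : ℝ) (hω : Irrational ω)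
    (F : T1 → ℝ → ℝ) (hF : IsQpfLift ω F)
    (ε : ℝ) (hε : 0 < ε)
    (A B : Set (T1 × ℝ))
    (hA : IsMinimalStrip ω F A) (hB : IsMinimalStrip ω F B) (hAB : StripLt A B)
    (C : Set (T1 × ℝ))
    (hC : C = {p : T1 × ℝ | phiSup A p.1 < p.2 ∧ p.2 < phiInf B p.1})
    (htrans : ∀ U V : Set (T1 × ℝ), IsOpen U → IsOpen V → U.Nonempty → V.Nonempty →
      U ⊆ C → V ⊆ C → ∃ n : ℕ,
        (((skew ω F)^[n] '' U) ∩ V).Nonempty ∨ (((skew ω F)^[n] ⁻¹' U) ∩ V).Nonempty) :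
    ∀ (θ₀ : T1) (x₀ : ℝ), phiSup A θ₀ < x₀ →
      ∃ k : ℕ, phiSup B (θ₀ + k • (ω : T1)) <
        fiberIter ω (fun θ x => F θ x + ε) k θ₀ x₀ := by
  subst hC
  intro θ₀ x₀ hx₀
  obtain ⟨m, hm⟩ := exists_phiInf_lt_fiberIter hω hF hε hA.1 hB.1 hAB htrans hx₀.le
  obtain ⟨j, hj⟩ := hB.exists_phiSup_lt_fiberIter hω hF hε hm.le
  refine ⟨m + j, ?_⟩
  rwa [fiberIter_add, add_nsmul, ← add_assoc]

/-- case (𝒜1)(a) of the Claim in the proof of Proposition 4.1: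
if the dynamics between two neighboring minimal invariant strips is topologically
transitive, then every `ε`-perturbed orbit starting above `A` eventually climbs above
`B`. -/
theorem transitive_case_climbing
    (ω : ℝ) (hω : Irrational ω)
    (F : T1 → ℝ → ℝ) (hF : IsQpfLift ω F)
    (ε : ℝ) (hε : 0 < ε)
    (A B : Set (T1 × ℝ))
    (hA : IsMinimalStrip ω F A) (hB : IsMinimalStrip ω F B) (hAB : StripLt A B)
    (hgap : ¬ ∃ S : Set (T1 × ℝ), IsInvStrip ω F S ∧ StripLt A S ∧ StripLt S B)
    (C : Set (T1 × ℝ))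
    (hC : C = {p : T1 × ℝ | phiSup A p.1 < p.2 ∧ p.2 < phiInf B p.1})
    (htrans : ∀ U V : Set (T1 × ℝ), IsOpen U → IsOpen V → U.Nonempty → V.Nonempty →
      U ⊆ C → V ⊆ C → ∃ n : ℕ,
        (((skew ω F)^[n] '' U) ∩ V).Nonempty ∨ (((skew ω F)^[n] ⁻¹' U) ∩ V).Nonempty) :
    ∀ (θ₀ : T1) (x₀ : ℝ), phiSup A θ₀ < x₀ →
      ∃ k : ℕ, phiSup B (θ₀ + k • (ω : T1)) <
        fiberIter ω (fun θ x => F θ x + ε) k θ₀ x₀ :=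
  transitive_case_climbing_general ω hω F hF ε hε A B hA hB hAB C hC htrans
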